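/- Let K be an invertible self-dual ℓ×ℓ matrix over F_2. Then for every i with 1 ≤ i ≤ ℓ and every z ∈ [0,1], f_i(z) + f_{ℓ+1-i}(1-z) ≤ 1. -/

import Mathlib

/-- The support of a vector over `ZMod 2`. -/
def supp {ℓ : ℕ} (v : Fin ℓ → ZMod 2) : Set (Fin ℓ) := {j | v j ≠ 0}

/-- The Hamming weight of a vector over `ZMod 2`. -/
def wt {ℓ : ℕ} (v : Fin ℓ → ZMod 2) : ℕ :=
  (Finset.univ.filter fun j => v j ≠ 0).card

/-- The kernel code `C_i`: the span of the rows `g_{i+1}, …, g_ℓ` of `K`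
(rows of index `≥ i` in 0-based indexing). -/
def kernelCode {ℓ : ℕ} (K : Matrix (Fin ℓ) (Fin ℓ) (ZMod 2)) (i : ℕ) :
    Submodule (ZMod 2) (Fin ℓ → ZMod 2) :=
  Submodule.span (ZMod 2) {v | ∃ r : Fin ℓ, i ≤ (r : ℕ) ∧ v = K r}

/-- `e` is an uncorrectable erasure pattern for the bit-channel of (0-based) index `i`. -/
def Uncorrectable {ℓ : ℕ} (K : Matrix (Fin ℓ) (Fin ℓ) (ZMod 2)) (i : Fin ℓ)
    (e : Fin ℓ → ZMod 2) : Prop :=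
  ∃ u' u'' : Fin ℓ → ZMod 2,
    (∀ j, j < i → u' j = u'' j) ∧ u' i ≠ u'' i ∧
      ∀ j, e j = 0 → Matrix.vecMul u' K j = Matrix.vecMul u'' K j

/-- `E_{i,w}`: the number of uncorrectable erasure patterns of weight `w`
for bit-channel `i`. -/
noncomputable def Ecount {ℓ : ℕ} (K : Matrix (Fin ℓ) (Fin ℓ) (ZMod 2)) (i : Fin ℓ)
    (w : ℕ) : ℕ :=
  Nat.card {e : Fin ℓ → ZMod 2 // Uncorrectable K i e ∧ wt e = w}

/-- `f_i(z) = ∑_{w=0}^{ℓ} E_{i,w} z^w (1-z)^{ℓ-w}`. -/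
noncomputable def fpoly {ℓ : ℕ} (K : Matrix (Fin ℓ) (Fin ℓ) (ZMod 2)) (i : Fin ℓ)
    (z : ℝ) : ℝ :=
  ∑ w ∈ Finset.range (ℓ + 1), (Ecount K i w : ℝ) * z ^ w * (1 - z) ^ (ℓ - w)

/-- Dual code with respect to the standard bilinear form `⟨u,v⟩ = ∑ j, u j * v j`. -/
def dualCode {ℓ : ℕ} (C : Submodule (ZMod 2) (Fin ℓ → ZMod 2)) :
    Submodule (ZMod 2) (Fin ℓ → ZMod 2) where
  carrier := {v | ∀ c ∈ C, ∑ j, v j * c j = 0}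
  add_mem' := by
    intro a b ha hb c hc
    simpa [add_mul, Finset.sum_add_distrib] using by rw [ha c hc, hb c hc]; simp
  zero_mem' := by intro c hc; simp
  smul_mem' := by
    intro r a ha c hc
    simp only [Pi.smul_apply, smul_eq_mul, mul_assoc, ← Finset.mul_sum, Set.mem_setOf_eq]
    rw [ha c hc, mul_zero]

/-- `K` is self-dual if `C_i = C_{ℓ-i}^⊥` for all `0 ≤ i ≤ ℓ`. -/
def SelfDual {ℓ : ℕ} (K : Matrix (Fin ℓ) (Fin ℓ) (ZMod 2)) : Prop :=
  ∀ i ≤ ℓ, kernelCode K i = dualCode (kernelCode K (ℓ - i))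


/-!
Put independent erasures of probability `z` on the `ℓ` positions; then `f_i(z)` is the probability
that the erasure pattern is uncorrectable for bit-channel `i`, and replacing `z` by `1 - z` amounts
to complementing the pattern. So it suffices that no pattern `e` is uncorrectable for channel `i`
while its complement is uncorrectable for channel `ℓ + 1 - i` (`i.rev` in 0-based indexing).
Both would give codewords `a ∈ g_i + C_i` supported in `e` and `b ∈ g_{ℓ+1-i} + C_{ℓ+1-i}`
supported off `e`, so `⟨a, b⟩ = 0`. Since also `b ∈ C_{ℓ-i} = C_i^⊥` and `a - g_i ∈ C_i`, `b` is
orthogonal to `g_i, …, g_ℓ`, i.e. `b ∈ C_{i-1}^⊥ = C_{ℓ+1-i}`. This puts the row `g_{ℓ+1-i}` in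
the span of the later rows, contradicting the invertibility of `K`.
-/

open Finset Matrix

section

variable {ℓ : ℕ}

lemma mem_dualCode_span_iff {S : Set (Fin ℓ → ZMod 2)} {v : Fin ℓ → ZMod 2} :
    v ∈ dualCode (Submodule.span (ZMod 2) S) ↔ ∀ s ∈ S, v ⬝ᵥ s = 0 := by
  refine ⟨fun hv s hs => hv s (Submodule.subset_span hs), fun hS c hc => ?_⟩
  change v ⬝ᵥ c = 0
  induction hc using Submodule.span_induction with
  | mem s hs => exact hS s hs
  | zero => exact dotProduct_zero v
  | add x y _ _ hx hy => rw [dotProduct_add, hx, hy, add_zero]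
  | smul r x _ hx => rw [dotProduct_smul, hx, smul_zero]

variable (K : Matrix (Fin ℓ) (Fin ℓ) (ZMod 2))

lemma row_mem_kernelCode {n : ℕ} {r : Fin ℓ} (h : n ≤ r) : K r ∈ kernelCode K n :=
  Submodule.subset_span ⟨r, h, rfl⟩

lemma kernelCode_antitone : Antitone (kernelCode K) := fun _ _ h =>
  Submodule.span_mono fun _ ⟨r, hr, hv⟩ => ⟨r, h.trans hr, hv⟩

lemma kernelCode_eq_span_image (n : ℕ) :
    kernelCode K n = Submodule.span (ZMod 2) (K '' {r | n ≤ (r : ℕ)}) := by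
  simp only [kernelCode, Set.image, eq_comm]
  rfl

lemma row_notMem_kernelCode_succ (hK : IsUnit K.det) (r : Fin ℓ) :
    K r ∉ kernelCode K (r + 1) := by
  have hli : LinearIndependent (ZMod 2) K.row :=
    linearIndependent_rows_iff_isUnit.mpr ((isUnit_iff_isUnit_det K).mpr hK)
  rw [kernelCode_eq_span_image]
  exact hli.notMem_span_image (s := {r' : Fin ℓ | (r : ℕ) + 1 ≤ r'}) (by simp)

lemma vecMul_mem_kernelCode {n : ℕ} {v : Fin ℓ → ZMod 2}
    (hv : ∀ r : Fin ℓ, (r : ℕ) < n → v r = 0) : v ᵥ* K ∈ kernelCode K n := by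
  rw [vecMul_eq_sum]
  refine Submodule.sum_mem _ fun r _ => ?_
  rcases lt_or_ge (r : ℕ) n with hr | hr
  · rw [hv r hr, zero_smul]
    exact Submodule.zero_mem _
  · exact Submodule.smul_mem _ _ (row_mem_kernelCode K hr)

variable {K}

lemma Uncorrectable.exists_codeword {i : Fin ℓ} {e : Fin ℓ → ZMod 2}
    (h : Uncorrectable K i e) :
    ∃ a : Fin ℓ → ZMod 2, a - K i ∈ kernelCode K (i + 1) ∧ ∀ j, e j = 0 → a j = 0 := by
  obtain ⟨u', u'', hlt, hne, hcov⟩ := h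
  refine ⟨(u' - u'') ᵥ* K, ?_, fun j hj => ?_⟩
  · have hsub : (u' - u'') ᵥ* K - K i = (u' - u'' - Pi.single i 1) ᵥ* K := by
      rw [sub_vecMul K (u' - u''), single_one_vecMul]
      rfl
    rw [hsub]
    refine vecMul_mem_kernelCode K fun r hr => ?_
    rcases (Nat.lt_succ_iff.mp hr).lt_or_eq with hri | hri
    · have hri : r < i := hri
      simp [hlt r hri, hri.ne]
    · obtain rfl : r = i := Fin.ext hri
      have hdiff : u' r - u'' r = 1 := by
        generalize u' r = x, u'' r = y at hne
        revert x y
        decide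
      simp [hdiff]
  · rw [sub_vecMul, Pi.sub_apply, hcov j hj, sub_self]

lemma SelfDual.kernelCode_eq_dualCode (hsd : SelfDual K) {m n : ℕ} (hmn : m + n = ℓ) :
    kernelCode K m = dualCode (kernelCode K n) := by
  rw [hsd m (by omega)]
  congr 2
  omega

lemma SelfDual.dotProduct_eq_zero (hsd : SelfDual K) {m n : ℕ} (hmn : m + n = ℓ)
    {x y : Fin ℓ → ZMod 2} (hx : x ∈ kernelCode K m) (hy : y ∈ kernelCode K n) : x ⬝ᵥ y = 0 :=
  (hsd.kernelCode_eq_dualCode hmn ▸ hx) y hy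

lemma dotProduct_eq_zero_of_add_one {e a b : Fin ℓ → ZMod 2} (ha : ∀ j, e j = 0 → a j = 0)
    (hb : ∀ j, (e + 1) j = 0 → b j = 0) : a ⬝ᵥ b = 0 := by
  refine Finset.sum_eq_zero fun j _ => ?_
  have hej : e j = 0 ∨ e j + 1 = 0 := by generalize e j = x; revert x; decide
  rcases hej with hej | hej
  · rw [ha j hej, zero_mul]
  · rw [hb j hej, mul_zero]

theorem not_uncorrectable_and_rev_add_one (hK : IsUnit K.det) (hsd : SelfDual K) (i : Fin ℓ)
    (e : Fin ℓ → ZMod 2) : ¬ (Uncorrectable K i e ∧ Uncorrectable K i.rev (e + 1)) := by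
  rintro ⟨hi, hi'⟩
  obtain ⟨a, ha, hae⟩ := hi.exists_codeword
  obtain ⟨b, hb, hbe⟩ := hi'.exists_codeword
  have hrev : (i : ℕ) + i.rev + 1 = ℓ := by rw [Fin.val_rev]; omega
  have hab : b ⬝ᵥ a = 0 := by rw [dotProduct_comm]; exact dotProduct_eq_zero_of_add_one hae hbe
  have hb_mem : b ∈ kernelCode K i.rev := by
    rw [← sub_add_cancel b (K i.rev)]
    exact add_mem (kernelCode_antitone K (Nat.le_succ _) hb) (row_mem_kernelCode K le_rfl)
  have hb_dual : b ∈ dualCode (kernelCode K i) := by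
    refine mem_dualCode_span_iff.2 ?_
    rintro _ ⟨r, hr, rfl⟩
    rcases hr.lt_or_eq with hr | hr
    · exact hsd.dotProduct_eq_zero (by omega) hb_mem (row_mem_kernelCode K hr)
    · obtain rfl : r = i := Fin.ext hr.symm
      rw [← sub_sub_cancel a (K r), dotProduct_sub, hab,
        hsd.dotProduct_eq_zero (by omega) hb_mem ha, sub_zero]
  have hb_succ : b ∈ kernelCode K (i.rev + 1) := by
    rwa [hsd.kernelCode_eq_dualCode (n := i) (by omega)]
  apply row_notMem_kernelCode_succ K hK i.rev
  rw [← sub_sub_cancel b (K i.rev)]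
  exact sub_mem hb_succ hb

end

section

variable {ℓ : ℕ}

lemma wt_le (e : Fin ℓ → ZMod 2) : wt e ≤ ℓ :=
  (card_filter_le _ _).trans_eq (card_fin ℓ)

lemma wt_add_one (e : Fin ℓ → ZMod 2) : wt (e + 1) = ℓ - wt e := by
  have hcompl : (univ.filter fun j => (e + 1) j ≠ 0) = (univ.filter fun j => e j ≠ 0)ᶜ := by
    ext j
    simp only [mem_filter, mem_compl, mem_univ, true_and, Pi.add_apply, Pi.one_apply]
    generalize e j = x
    revert x
    decide
  rw [wt, wt, hcompl, card_compl, Fintype.card_fin]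

/-- The probability that independent erasures of probability `z` hit exactly the support of `e`. -/
noncomputable def patternWeight (z : ℝ) (e : Fin ℓ → ZMod 2) : ℝ :=
  z ^ wt e * (1 - z) ^ (ℓ - wt e)

lemma patternWeight_nonneg {z : ℝ} (hz : z ∈ Set.Icc (0 : ℝ) 1) (e : Fin ℓ → ZMod 2) :
    0 ≤ patternWeight z e :=
  mul_nonneg (pow_nonneg hz.1 _) (pow_nonneg (sub_nonneg.2 hz.2) _)

lemma patternWeight_one_sub_add_one (z : ℝ) (e : Fin ℓ → ZMod 2) :
    patternWeight (1 - z) (e + 1) = patternWeight z e := by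
  rw [patternWeight, patternWeight, wt_add_one, Nat.sub_sub_self (wt_le e), sub_sub_cancel,
    mul_comm]

lemma patternWeight_eq_prod (z : ℝ) (e : Fin ℓ → ZMod 2) :
    patternWeight z e = ∏ j, if e j ≠ 0 then z else 1 - z := by
  rw [prod_ite, prod_const, prod_const, patternWeight, wt]
  congr 2
  have := card_filter_add_card_filter_not (s := univ) (fun j => e j ≠ 0)
  rw [card_univ, Fintype.card_fin] at this
  omega

lemma sum_patternWeight (z : ℝ) : ∑ e : Fin ℓ → ZMod 2, patternWeight z e = 1 := by
  have hcoord : ∑ x : ZMod 2, (if x ≠ 0 then z else 1 - z) = 1 := by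
    rw [show (univ : Finset (ZMod 2)) = {0, 1} by decide, sum_pair zero_ne_one]
    norm_num
  simp_rw [patternWeight_eq_prod]
  rw [← Fintype.prod_sum (fun (_ : Fin ℓ) (x : ZMod 2) => if x ≠ 0 then z else 1 - z), hcoord,
    prod_const_one]

variable (K : Matrix (Fin ℓ) (Fin ℓ) (ZMod 2)) (i : Fin ℓ)

open scoped Classical in
lemma fpoly_eq_sum_patternWeight (z : ℝ) :
    fpoly K i z = ∑ e ∈ univ.filter (Uncorrectable K i), patternWeight z e := by
  rw [fpoly, ← sum_fiberwise_of_maps_to (g := wt) (t := range (ℓ + 1))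
    fun e _ => mem_range.2 (Nat.lt_succ_of_le (wt_le e))]
  refine sum_congr rfl fun w _ => ?_
  have hcard : Ecount K i w = #{e | Uncorrectable K i e ∧ wt e = w} := by
    rw [Ecount, Nat.card_eq_fintype_card, Fintype.card_subtype]
  rw [filter_filter, sum_congr rfl fun e he => by rw [patternWeight, (mem_filter.1 he).2.2],
    sum_const, nsmul_eq_mul, hcard, mul_assoc]

open scoped Classical in
lemma fpoly_one_sub (z : ℝ) :
    fpoly K i (1 - z) =
      ∑ e ∈ univ.filter (fun e => Uncorrectable K i (e + 1)), patternWeight z e := by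
  rw [fpoly_eq_sum_patternWeight, sum_filter, sum_filter]
  refine (Fintype.sum_equiv (Equiv.addRight 1) _ _ fun e => ?_).symm
  simp only [Equiv.coe_addRight, patternWeight_one_sub_add_one]

end

theorem fpoly_add_rev_le_one_general {ℓ : ℕ}
    (K : Matrix (Fin ℓ) (Fin ℓ) (ZMod 2)) (hK : IsUnit K.det)
    (hsd : SelfDual K) (i : Fin ℓ) (z : ℝ) (hz : z ∈ Set.Icc (0 : ℝ) 1) :
    fpoly K i z + fpoly K i.rev (1 - z) ≤ 1 := by
  classical
  have hdisj : Disjoint (univ.filter (Uncorrectable K i))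
      (univ.filter fun e => Uncorrectable K i.rev (e + 1)) :=
    disjoint_filter.2 fun e _ h h' => not_uncorrectable_and_rev_add_one hK hsd i e ⟨h, h'⟩
  rw [fpoly_eq_sum_patternWeight, fpoly_one_sub, ← sum_union hdisj]
  exact (sum_le_univ_sum_of_nonneg (patternWeight_nonneg hz)).trans_eq (sum_patternWeight z)

/-- For a self-dual kernel, `f_i(z) + f_{ℓ+1-i}(1-z) ≤ 1` on `[0,1]`. -/
theorem fpoly_add_rev_le_one {ℓ : ℕ} (hℓ : 0 < ℓ)
    (K : Matrix (Fin ℓ) (Fin ℓ) (ZMod 2)) (hK : IsUnit K.det)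
    (hsd : SelfDual K) (i : Fin ℓ) (z : ℝ) (hz : z ∈ Set.Icc (0 : ℝ) 1) :
    fpoly K i z + fpoly K i.rev (1 - z) ≤ 1 :=
  fpoly_add_rev_le_one_general K hK hsd i z hz
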